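/- Let A be a finite-dimensional algebra over a field k, let e, f, f' be idempotents of A, and suppose that Hom_k(f A, k) ≅ A f' as left A-modules, where Hom_k(fA, k) carries the left A-action (a · φ)(x) := φ(xa). Then the endofunctor (A e ⊗_k f A) ⊗_A − of the category of left A-modules is left adjoint to the endofunctor (A f' ⊗_k e A) ⊗_A −, where A e ⊗_k f A and A f' ⊗_k e A carry the A-A-bimodule structures a · (x ⊗ y) · b := ax ⊗ yb. -/

import Mathlib

open TensorProduct

set_option maxHeartbeats 1000000
set_option synthInstance.maxHeartbeats 400000
set_option linter.unusedSectionVars false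

universe u v

section

variable (k A : Type u) [Field k] [Ring A] [Algebra k A]

/-- The left ideal `A e` of `A`, as a `k`-subspace. -/
noncomputable def leftIdeal (e : A) : Submodule k A :=
  LinearMap.range (LinearMap.mulRight k e)

/-- The right ideal `e A` of `A`, as a `k`-subspace. -/
noncomputable def rightIdeal (e : A) : Submodule k A :=
  LinearMap.range (LinearMap.mulLeft k e)

/-- Left multiplication by `a` on the left ideal `A e` (the left `A`-action on `A e`). -/
noncomputable def lmulIdeal (e a : A) : leftIdeal k A e →ₗ[k] leftIdeal k A e :=
  (LinearMap.mulLeft k a).restrict (by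
    rintro x ⟨y, rfl⟩
    exact ⟨a * y, by simp [LinearMap.mulRight_apply, mul_assoc]⟩)

/-- Right multiplication by `a` on the right ideal `e A`; it induces the left `A`-action
`(a · ψ)(x) = ψ(x a)` on the dual `Hom_k(eA, k)`. -/
noncomputable def rmulIdeal (e a : A) : rightIdeal k A e →ₗ[k] rightIdeal k A e :=
  (LinearMap.mulRight k a).restrict (by
    rintro x ⟨y, rfl⟩
    exact ⟨y * a, by simp [LinearMap.mulLeft_apply, mul_assoc]⟩)

/-- The `A`-`A`-bimodule `A e ⊗[k] f A`, realised inside `A ⊗[k] A`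
(with bimodule structure `a · (x ⊗ y) · b = ax ⊗ yb`). -/
noncomputable def projBimod (e f : A) : Submodule k (A ⊗[k] A) :=
  LinearMap.range (TensorProduct.map (LinearMap.mulRight k e) (LinearMap.mulLeft k f))

section Bimod

variable (X : Type u) [AddCommGroup X] [Module k X]
  [Module A X] [Module Aᵐᵒᵖ X] [IsScalarTower k A X] [IsScalarTower k Aᵐᵒᵖ X]
  [SMulCommClass A Aᵐᵒᵖ X]

variable (M : Type v) [AddCommGroup M] [Module k M] [Module A M] [IsScalarTower k A M]

/-- The balancing relations defining `X ⊗_A M` for an `A`-`A`-bimodule `X` and a left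
`A`-module `M`. -/
noncomputable def relF : Submodule k (X ⊗[k] M) :=
  Submodule.span k {z | ∃ (a : A) (w : X) (m : M),
    z = (MulOpposite.op a • w) ⊗ₜ[k] m - w ⊗ₜ[k] (a • m)}

/-- The value `X ⊗_A M` of the functor `X ⊗_A −` on a left `A`-module `M`. -/
abbrev QF := (X ⊗[k] M) ⧸ relF k A X M

/-- Left multiplication by `a ∈ A` on `X`, as a `k`-linear map. -/
noncomputable def lsmulX (a : A) : X →ₗ[k] X :=
  (Algebra.lsmul k k X : A →ₐ[k] Module.End k X) a

lemma relF_le_comap_lact (a : A) :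
    relF k A X M ≤ (relF k A X M).comap
      (TensorProduct.map (lsmulX k A X a) LinearMap.id) := by
  refine Submodule.span_le.mpr ?_
  rintro z ⟨b, w, m, rfl⟩
  simp only [Submodule.mem_comap, map_sub, TensorProduct.map_tmul, LinearMap.id_coe, id_eq,
    SetLike.mem_coe, lsmulX, Algebra.lsmul_coe]
  rw [smul_comm]
  exact Submodule.subset_span ⟨b, a • w, m, rfl⟩

/-- The left `A`-action on `X ⊗_A M` (through the left action on `X`). -/
noncomputable def LactF (a : A) : QF k A X M →ₗ[k] QF k A X M :=
  Submodule.mapQ _ _ (TensorProduct.map (lsmulX k A X a) LinearMap.id)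
    (relF_le_comap_lact k A X M a)

end Bimod

section Funct

variable (X : Type u) [AddCommGroup X] [Module k X]
  [Module A X] [Module Aᵐᵒᵖ X] [IsScalarTower k A X] [IsScalarTower k Aᵐᵒᵖ X]
  [SMulCommClass A Aᵐᵒᵖ X]

variable {M M' : Type v} [AddCommGroup M] [Module k M] [Module A M] [IsScalarTower k A M]
  [AddCommGroup M'] [Module k M'] [Module A M'] [IsScalarTower k A M']

lemma relF_le_comap_map (χ : M →ₗ[k] M') (hχ : ∀ (a : A) (m : M), χ (a • m) = a • χ m) :
    relF k A X M ≤ (relF k A X M').comap (TensorProduct.map LinearMap.id χ) := by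
  refine Submodule.span_le.mpr ?_
  rintro z ⟨b, w, m, rfl⟩
  simp only [Submodule.mem_comap, map_sub, TensorProduct.map_tmul, LinearMap.id_coe, id_eq,
    SetLike.mem_coe, hχ]
  exact Submodule.subset_span ⟨b, w, χ m, rfl⟩

/-- Functoriality of `X ⊗_A −` in the module variable. -/
noncomputable def mapF (χ : M →ₗ[k] M') (hχ : ∀ (a : A) (m : M), χ (a • m) = a • χ m) :
    QF k A X M →ₗ[k] QF k A X M' :=
  Submodule.mapQ _ _ (TensorProduct.map LinearMap.id χ) (relF_le_comap_map k A X χ hχ)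

lemma mapF_LactF_comm (χ : M →ₗ[k] M') (hχ : ∀ (a : A) (m : M), χ (a • m) = a • χ m)
    (a : A) :
    (mapF k A X χ hχ) ∘ₗ (LactF k A X M a) = (LactF k A X M' a) ∘ₗ (mapF k A X χ hχ) := by
  refine Submodule.linearMap_qext _ ?_
  refine TensorProduct.ext' fun w m => ?_
  simp [mapF, LactF, Submodule.mapQ_apply]

end Funct

section Homs

variable (X Y : Type u) [AddCommGroup X] [Module k X]
  [Module A X] [Module Aᵐᵒᵖ X] [IsScalarTower k A X] [IsScalarTower k Aᵐᵒᵖ X]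
  [SMulCommClass A Aᵐᵒᵖ X]
  [AddCommGroup Y] [Module k Y]
  [Module A Y] [Module Aᵐᵒᵖ Y] [IsScalarTower k A Y] [IsScalarTower k Aᵐᵒᵖ Y]
  [SMulCommClass A Aᵐᵒᵖ Y]

/-- The hom-set `Hom_A(X ⊗_A M, N)` of left `A`-module maps. -/
abbrev HomF (M N : Type v) [AddCommGroup M] [Module k M] [Module A M] [IsScalarTower k A M]
    [AddCommGroup N] [Module k N] [Module A N] [IsScalarTower k A N] :=
  {φ : QF k A X M →ₗ[k] N // ∀ (a : A) (q : QF k A X M), φ (LactF k A X M a q) = a • φ q}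

/-- The hom-set `Hom_A(M, Y ⊗_A N)` of left `A`-module maps. -/
abbrev HomG (M N : Type v) [AddCommGroup M] [Module k M] [Module A M] [IsScalarTower k A M]
    [AddCommGroup N] [Module k N] [Module A N] [IsScalarTower k A N] :=
  {ψ : M →ₗ[k] QF k A Y N // ∀ (a : A) (m : M), ψ (a • m) = LactF k A Y N a (ψ m)}

variable {M M' N N' : Type v} [AddCommGroup M] [Module k M] [Module A M] [IsScalarTower k A M]
  [AddCommGroup M'] [Module k M'] [Module A M'] [IsScalarTower k A M']
  [AddCommGroup N] [Module k N] [Module A N] [IsScalarTower k A N]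
  [AddCommGroup N'] [Module k N'] [Module A N'] [IsScalarTower k A N']

/-- Post-composition with an `A`-linear map `N → N'` on `Hom_A(X ⊗_A M, N)`. -/
noncomputable def postcompHomF (χ : N →ₗ[k] N') (hχ : ∀ (a : A) (n : N), χ (a • n) = a • χ n)
    (φ : HomF k A X M N) : HomF k A X M N' :=
  ⟨χ ∘ₗ φ.1, fun a q => by
    simp only [LinearMap.comp_apply, φ.2 a q, hχ]⟩

/-- Pre-composition with (the image under the functor `X ⊗_A −` of) an `A`-linear map
`M' → M` on `Hom_A(X ⊗_A M, N)`. -/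
noncomputable def precompHomF (χ : M' →ₗ[k] M) (hχ : ∀ (a : A) (m : M'), χ (a • m) = a • χ m)
    (φ : HomF k A X M N) : HomF k A X M' N :=
  ⟨φ.1 ∘ₗ mapF k A X χ hχ, fun a q => by
    have h := congrArg (fun (F : QF k A X M' →ₗ[k] QF k A X M) => φ.1 (F q))
      (mapF_LactF_comm k A X χ hχ a)
    simp only [LinearMap.comp_apply] at h
    simp only [LinearMap.comp_apply, h, φ.2]⟩

end Homs

/-!
Because `Θ` is `A`-linear, the perfect pairing `⟨w, c⟩ := Θ⁻¹(c)(w)` between `f A` and `A f'` is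
balanced: `⟨w a, c⟩ = ⟨w, a c⟩`. It yields the counit
`(A e ⊗ f A) ⊗_A (A f' ⊗ e A) ⊗_A N → N`, `u e ⊗ f v ⊗ c f' ⊗ e d ⊗ n ↦ ⟨f v, c f'⟩ u e d n`.
For a basis `bᵢ` of `f A` with dual basis `bᵢ*`, the unit is
`M → (A f' ⊗ e A) ⊗_A (A e ⊗ f A) ⊗_A M`, `m ↦ ∑ᵢ Θ(bᵢ*) ⊗ e ⊗ e ⊗ bᵢ ⊗ m`; it is `A`-linear
because the canonical element `∑ᵢ bᵢ* ⊗ bᵢ` is invariant under the right action of `A` on `f A`.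
Both triangle identities reduce to expanding a vector of `f A` in the basis `bᵢ` and a linear
form on `f A` in the dual basis.
-/

section Development

variable {k A}

theorem Module.Basis.sum_coord_comp_apply {ι K V W : Type*} [Fintype ι] [CommSemiring K]
    [AddCommMonoid V] [Module K V] [AddCommMonoid W] [Module K W] (b : Module.Basis ι K V)
    (β : Module.Dual K V →ₗ[K] V →ₗ[K] W) (r : V →ₗ[K] V) :
    ∑ i, β (b.coord i ∘ₗ r) (b i) = ∑ i, β (b.coord i) (r (b i)) := by
  calc ∑ i, β (b.coord i ∘ₗ r) (b i)
      = ∑ i, ∑ j, b.coord i (r (b j)) • β (b.coord j) (b i) := by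
        refine Finset.sum_congr rfl fun i _ => ?_
        conv_lhs => rw [← b.sum_dual_apply_smul_coord (b.coord i ∘ₗ r)]
        simp [map_sum]
    _ = ∑ j, ∑ i, b.coord i (r (b j)) • β (b.coord j) (b i) := Finset.sum_comm
    _ = ∑ j, β (b.coord j) (r (b j)) := by
        refine Finset.sum_congr rfl fun j _ => ?_
        conv_rhs => rw [← b.sum_repr (r (b j)), map_sum]
        simp only [map_smul, Module.Basis.coord_apply]

structure IsProjBimodEmbedding {Z : Type*} [AddCommGroup Z] [Module k Z] [Module A Z]
    [Module Aᵐᵒᵖ Z] (ι : Z →ₗ[k] A ⊗[k] A) (e f : A) : Prop where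
  injective : Function.Injective ι
  range_eq : LinearMap.range ι = projBimod k A e f
  map_left_smul : ∀ (a : A) (z : Z),
    ι (a • z) = TensorProduct.map (LinearMap.mulLeft k a) LinearMap.id (ι z)
  map_right_smul : ∀ (b : A) (z : Z),
    ι (MulOpposite.op b • z) = TensorProduct.map LinearMap.id (LinearMap.mulRight k b) (ι z)

namespace IsProjBimodEmbedding

variable {Z : Type*} [AddCommGroup Z] [Module k Z] [Module A Z] [Module Aᵐᵒᵖ Z]
  {ι : Z →ₗ[k] A ⊗[k] A} {e f : A} (hZ : IsProjBimodEmbedding ι e f)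

/-- The surjection `A ⊗ A → Z` corresponding to `a ⊗ b ↦ a e ⊗ f b`. -/
noncomputable def proj : A ⊗[k] A →ₗ[k] Z :=
  (LinearEquiv.ofInjective ι hZ.injective).symm.toLinearMap ∘ₗ
    (LinearEquiv.ofEq _ _ hZ.range_eq.symm).toLinearMap ∘ₗ
    (TensorProduct.map (LinearMap.mulRight k e) (LinearMap.mulLeft k f)).rangeRestrict

theorem apply_proj (t : A ⊗[k] A) :
    ι (hZ.proj t) = TensorProduct.map (LinearMap.mulRight k e) (LinearMap.mulLeft k f) t := by
  rw [proj, LinearMap.comp_apply, LinearEquiv.coe_coe,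
    ← LinearEquiv.ofInjective_apply ι (h := hZ.injective), LinearEquiv.apply_symm_apply]
  rfl

theorem apply_proj_tmul (a b : A) : ι (hZ.proj (a ⊗ₜ b)) = (a * e) ⊗ₜ (f * b) := by
  simp [hZ.apply_proj]

theorem proj_surjective : Function.Surjective hZ.proj :=
  (LinearEquiv.ofInjective ι hZ.injective).symm.surjective.comp <|
    (LinearEquiv.ofEq _ _ hZ.range_eq.symm).surjective.comp (LinearMap.surjective_rangeRestrict _)

theorem proj_mul_tmul (he : IsIdempotentElem e) (a b : A) :
    hZ.proj ((a * e) ⊗ₜ b) = hZ.proj (a ⊗ₜ b) :=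
  hZ.injective <| by rw [apply_proj_tmul, apply_proj_tmul, mul_assoc, he.eq]

theorem proj_tmul_mul (hf : IsIdempotentElem f) (a b : A) :
    hZ.proj (a ⊗ₜ (f * b)) = hZ.proj (a ⊗ₜ b) :=
  hZ.injective <| by rw [apply_proj_tmul, apply_proj_tmul, ← mul_assoc, hf.eq]

theorem smul_proj_tmul (c a b : A) : c • hZ.proj (a ⊗ₜ b) = hZ.proj ((c * a) ⊗ₜ b) :=
  hZ.injective <| by simp [hZ.map_left_smul, apply_proj_tmul, mul_assoc]

theorem op_smul_proj_tmul (c a b : A) :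
    MulOpposite.op c • hZ.proj (a ⊗ₜ b) = hZ.proj (a ⊗ₜ (b * c)) :=
  hZ.injective <| by simp [hZ.map_right_smul, apply_proj_tmul, mul_assoc]

end IsProjBimodEmbedding

section QuotientTensor

variable {X : Type u} [AddCommGroup X] [Module k X] [Module A X] [Module Aᵐᵒᵖ X]
  {M M' : Type v} [AddCommGroup M] [Module k M] [Module A M] [AddCommGroup M'] [Module k M']
  [Module A M']

variable (k A) in
noncomputable def mkQF : X →ₗ[k] M →ₗ[k] QF k A X M :=
  (TensorProduct.mk k X M).compr₂ (relF k A X M).mkQ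

section

omit [Algebra k A] [Module A X]

theorem mkQF_apply (x : X) (m : M) :
    mkQF k A x m = Submodule.Quotient.mk (p := relF k A X M) (x ⊗ₜ m) := rfl

theorem mkQF_op_smul (a : A) (x : X) (m : M) :
    mkQF k A (MulOpposite.op a • x) m = mkQF k A x (a • m) :=
  (Submodule.Quotient.eq _).2 (Submodule.subset_span ⟨a, x, m, rfl⟩)

theorem QF_hom_ext {W : Type*} [AddCommGroup W] [Module k W] {g g' : QF k A X M →ₗ[k] W}
    (h : ∀ x m, g (mkQF k A x m) = g' (mkQF k A x m)) : g = g' :=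
  Submodule.linearMap_qext _ (TensorProduct.ext' h)

end

theorem IsProjBimodEmbedding.QF_hom_ext {ι : X →ₗ[k] A ⊗[k] A} {e f : A}
    (hX : IsProjBimodEmbedding ι e f) {W : Type*} [AddCommGroup W] [Module k W]
    {g g' : QF k A X M →ₗ[k] W}
    (h : ∀ a b m, g (mkQF k A (hX.proj (a ⊗ₜ b)) m) = g' (mkQF k A (hX.proj (a ⊗ₜ b)) m)) :
    g = g' := by
  have hsurj : Function.Surjective (TensorProduct.map hX.proj (LinearMap.id (M := M))) :=
    TensorProduct.map_surjective hX.proj_surjective Function.surjective_id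
  refine Submodule.linearMap_qext _ <| (LinearMap.cancel_right hsurj).1 ?_
  exact TensorProduct.ext_threefold fun a b m => h a b m

variable [IsScalarTower k A X] [IsScalarTower k Aᵐᵒᵖ X] [SMulCommClass A Aᵐᵒᵖ X]
  [IsScalarTower k A M] [IsScalarTower k A M']

theorem LactF_mkQF (a : A) (x : X) (m : M) :
    LactF k A X M a (mkQF k A x m) = mkQF k A (a • x) m := by
  simp [mkQF_apply, LactF, lsmulX]

theorem mapF_mkQF (χ : M →ₗ[k] M') (hχ : ∀ (a : A) (m : M), χ (a • m) = a • χ m)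
    (x : X) (m : M) : mapF k A X χ hχ (mkQF k A x m) = mkQF k A x (χ m) := by
  simp [mkQF_apply, mapF]

end QuotientTensor

section Pairing

variable {f f' : A} (Θ : (rightIdeal k A f →ₗ[k] k) ≃ₗ[k] leftIdeal k A f')

def IsALinear : Prop :=
  ∀ (a : A) (ψ : rightIdeal k A f →ₗ[k] k), Θ (ψ ∘ₗ rmulIdeal k A f a) = lmulIdeal k A f' a (Θ ψ)

/-- The pairing `⟨v, c⟩ := Θ⁻¹(c f')(f v)` between `f A` and `A f'`, pulled back to `A × A`. -/
noncomputable def idealPairing : A →ₗ[k] A →ₗ[k] k :=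
  (Θ.symm.toLinearMap ∘ₗ (LinearMap.mulRight k f').rangeRestrict).flip ∘ₗ
    (LinearMap.mulLeft k f).rangeRestrict

theorem idealPairing_apply (v c : A) :
    idealPairing Θ v c = Θ.symm ⟨c * f', c, rfl⟩ ⟨f * v, v, rfl⟩ := rfl

theorem idealPairing_mul_left (hΘ : IsALinear Θ) (v a c : A) :
    idealPairing Θ (v * a) c = idealPairing Θ v (a * c) := by
  have h : Θ.symm ⟨a * c * f', a * c, rfl⟩ = Θ.symm ⟨c * f', c, rfl⟩ ∘ₗ rmulIdeal k A f a := by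
    rw [Θ.symm_apply_eq, hΘ, Θ.apply_symm_apply]
    exact Subtype.ext (mul_assoc a c f')
  rw [idealPairing_apply, idealPairing_apply, h, LinearMap.comp_apply]
  exact congrArg _ (Subtype.ext (mul_assoc f v a).symm)

theorem idealPairing_idem_mul (hf : IsIdempotentElem f) (v c : A) :
    idealPairing Θ (f * v) c = idealPairing Θ v c := by
  simp only [idealPairing_apply, ← mul_assoc, hf.eq]

theorem idealPairing_mul_idem (hf' : IsIdempotentElem f') (v c : A) :
    idealPairing Θ v (c * f') = idealPairing Θ v c := by
  simp only [idealPairing_apply, mul_assoc, hf'.eq]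

theorem idealPairing_apply_coe (hf' : IsIdempotentElem f') (v : A) (ρ : rightIdeal k A f →ₗ[k] k) :
    idealPairing Θ v (Θ ρ) = ρ ⟨f * v, v, rfl⟩ := by
  obtain ⟨c, hc⟩ := (Θ ρ).2
  have hc' : (Θ ρ : A) * f' = Θ ρ := by rw [← hc, LinearMap.mulRight_apply, mul_assoc, hf'.eq]
  rw [idealPairing_apply]
  simp only [hc', Subtype.coe_eta, LinearEquiv.symm_apply_apply]

theorem coe_idealPairing (hf : IsIdempotentElem f) (w : rightIdeal k A f) (c : A) :
    idealPairing Θ w c = Θ.symm ⟨c * f', c, rfl⟩ w := by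
  obtain ⟨v, hv⟩ := w.2
  have hw : f * (w : A) = w := by rw [← hv, LinearMap.mulLeft_apply, ← mul_assoc, hf.eq]
  rw [idealPairing_apply]
  simp only [hw, Subtype.coe_eta]

noncomputable def contraction : A ⊗[k] A →ₗ[k] A ⊗[k] A →ₗ[k] A :=
  TensorProduct.curry <| LinearMap.mul' k A ∘ₗ
    LinearMap.lTensor A ((TensorProduct.lid k A).toLinearMap ∘ₗ
      LinearMap.rTensor A (TensorProduct.lift (idealPairing Θ)) ∘ₗ
      (TensorProduct.assoc k A A A).symm.toLinearMap) ∘ₗ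
    (TensorProduct.assoc k A A (A ⊗[k] A)).toLinearMap

theorem contraction_tmul (u v c d : A) :
    contraction Θ (u ⊗ₜ v) (c ⊗ₜ d) = idealPairing Θ v c • (u * d) := by
  simp [contraction]

theorem contraction_map_mulRight_right (a : A) (s t : A ⊗[k] A) :
    contraction Θ s (TensorProduct.map LinearMap.id (LinearMap.mulRight k a) t) =
      contraction Θ s t * a := by
  have h : (contraction Θ).compl₂ (TensorProduct.map LinearMap.id (LinearMap.mulRight k a)) =
      (contraction Θ).compr₂ (LinearMap.mulRight k a) :=
    TensorProduct.ext' fun u v => TensorProduct.ext' fun c d => by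
      simp [contraction_tmul, mul_assoc]
  exact LinearMap.congr_fun₂ h s t

theorem contraction_map_mulLeft_left (a : A) (s t : A ⊗[k] A) :
    contraction Θ (TensorProduct.map (LinearMap.mulLeft k a) LinearMap.id s) t =
      a * contraction Θ s t := by
  have h : contraction Θ ∘ₗ TensorProduct.map (LinearMap.mulLeft k a) LinearMap.id =
      (contraction Θ).compr₂ (LinearMap.mulLeft k a) :=
    TensorProduct.ext' fun u v => TensorProduct.ext' fun c d => by
      simp [contraction_tmul, mul_assoc]
  exact LinearMap.congr_fun₂ h s t

theorem contraction_map_mulRight_left (hΘ : IsALinear Θ) (a : A) (s t : A ⊗[k] A) :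
    contraction Θ (TensorProduct.map LinearMap.id (LinearMap.mulRight k a) s) t =
      contraction Θ s (TensorProduct.map (LinearMap.mulLeft k a) LinearMap.id t) := by
  have h : contraction Θ ∘ₗ TensorProduct.map LinearMap.id (LinearMap.mulRight k a) =
      (contraction Θ).compl₂ (TensorProduct.map (LinearMap.mulLeft k a) LinearMap.id) :=
    TensorProduct.ext' fun u v => TensorProduct.ext' fun c d => by
      simp [contraction_tmul, idealPairing_mul_left Θ hΘ]
  exact LinearMap.congr_fun₂ h s t

end Pairing

section Adjunction

variable {e f f' : A} (Θ : (rightIdeal k A f →ₗ[k] k) ≃ₗ[k] leftIdeal k A f')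
  {X Y : Type u} [AddCommGroup X] [Module k X] [Module A X] [Module Aᵐᵒᵖ X]
  [AddCommGroup Y] [Module k Y] [Module A Y] [Module Aᵐᵒᵖ Y]
  {ιX : X →ₗ[k] A ⊗[k] A} (hX : IsProjBimodEmbedding ιX e f)
  {ιY : Y →ₗ[k] A ⊗[k] A} (hY : IsProjBimodEmbedding ιY f' e)
  {I : Type*} [Fintype I] (b : Module.Basis I k (rightIdeal k A f))
  {M N : Type v} [AddCommGroup M] [Module k M] [Module A M] [AddCommGroup N] [Module k N]
  [Module A N]

/-- Evaluated at the canonical element `∑ bᵢ* ⊗ bᵢ` of `Hom_k(f A, k) ⊗ f A`, this is the unit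
of the adjunction followed by `Y ⊗_A φ₀`. -/
noncomputable def unitPairing (φ₀ : QF k A X M →ₗ[k] N) :
    (rightIdeal k A f →ₗ[k] k) →ₗ[k] rightIdeal k A f →ₗ[k] M →ₗ[k] QF k A Y N :=
  (LinearMap.llcomp k M N (QF k A Y N) ∘ₗ mkQF k A ∘ₗ hY.proj ∘ₗ
      (TensorProduct.mk k A A).flip 1 ∘ₗ (leftIdeal k A f').subtype ∘ₗ Θ.toLinearMap).compl₂
    (LinearMap.llcomp k M (QF k A X M) N φ₀ ∘ₗ mkQF k A ∘ₗ hX.proj ∘ₗ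
      TensorProduct.mk k A A 1 ∘ₗ (rightIdeal k A f).subtype)

theorem unitPairing_apply (φ₀ : QF k A X M →ₗ[k] N) (ρ : rightIdeal k A f →ₗ[k] k)
    (z : rightIdeal k A f) (m : M) :
    unitPairing Θ hX hY φ₀ ρ z m =
      mkQF k A (hY.proj ((Θ ρ : A) ⊗ₜ 1)) (φ₀ (mkQF k A (hX.proj (1 ⊗ₜ (z : A))) m)) := rfl

theorem unitPairing_smul (φ₀ : QF k A X M →ₗ[k] N) (ρ : rightIdeal k A f →ₗ[k] k)
    (z : rightIdeal k A f) (a : A) (m : M) :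
    unitPairing Θ hX hY φ₀ ρ z (a • m) = unitPairing Θ hX hY φ₀ ρ (rmulIdeal k A f a z) m := by
  rw [unitPairing_apply, unitPairing_apply, ← mkQF_op_smul, hX.op_smul_proj_tmul]
  rfl

noncomputable def transpose (φ₀ : QF k A X M →ₗ[k] N) : M →ₗ[k] QF k A Y N :=
  ∑ i, unitPairing Θ hX hY φ₀ (b.coord i) (b i)

theorem transpose_apply (φ₀ : QF k A X M →ₗ[k] N) (m : M) :
    transpose Θ hX hY b φ₀ m = ∑ i, unitPairing Θ hX hY φ₀ (b.coord i) (b i) m :=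
  LinearMap.sum_apply _ _ _

section

variable [IsScalarTower k A X] [IsScalarTower k Aᵐᵒᵖ X] [SMulCommClass A Aᵐᵒᵖ X]
  [IsScalarTower k A M]

theorem transpose_comp_mapF {M' : Type v} [AddCommGroup M'] [Module k M'] [Module A M']
    [IsScalarTower k A M'] (χ : M' →ₗ[k] M) (hχ : ∀ (a : A) (m : M'), χ (a • m) = a • χ m)
    (φ₀ : QF k A X M →ₗ[k] N) :
    transpose Θ hX hY b (φ₀ ∘ₗ mapF k A X χ hχ) = transpose Θ hX hY b φ₀ ∘ₗ χ := by
  ext m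
  simp [transpose_apply, unitPairing_apply, mapF_mkQF]

end

variable [IsScalarTower k A N]

variable (ιX) in
noncomputable def counit : X →ₗ[k] QF k A Y N →ₗ[k] N :=
  LinearMap.flip <| (relF k A Y N).liftQ
    (TensorProduct.lift.equiv (RingHom.id k) Y N N ∘ₗ
      ((contraction Θ).compl₁₂ ιX ιY).compr₂ (Algebra.lsmul k k N).toLinearMap).flip <| by
    rw [relF, Submodule.span_le]
    rintro _ ⟨a, y, n, rfl⟩
    ext x
    simp [hY.map_right_smul, contraction_map_mulRight_right]

omit [Module A X] [Module Aᵐᵒᵖ X] in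
theorem counit_mkQF (x : X) (y : Y) (n : N) :
    counit Θ ιX hY x (mkQF k A y n) = contraction Θ (ιX x) (ιY y) • n := by
  rw [counit, LinearMap.flip_apply, mkQF_apply, Submodule.liftQ_apply]
  simp

theorem counit_smul (hX : IsProjBimodEmbedding ιX e f) (a : A) (x : X) (q : QF k A Y N) :
    counit Θ ιX hY (a • x) q = a • counit Θ ιX hY x q := by
  refine LinearMap.congr_fun (QF_hom_ext (g := counit Θ ιX hY (a • x))
    (g' := Algebra.lsmul k k N a ∘ₗ counit Θ ιX hY x) fun y n => ?_) q
  simp [counit_mkQF, hX.map_left_smul, contraction_map_mulLeft_left, mul_smul]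

theorem sum_mkQF_comp_counit_eq_id (he : IsIdempotentElem e) (hf : IsIdempotentElem f)
    (hf' : IsIdempotentElem f') :
    ∑ i, mkQF k A (hY.proj ((Θ (b.coord i) : A) ⊗ₜ 1)) ∘ₗ
      counit Θ ιX hY (N := N) (hX.proj (1 ⊗ₜ (b i : A))) = LinearMap.id := by
  refine hY.QF_hom_ext fun c d n => ?_
  set ρ := Θ.symm ⟨c * f', c, rfl⟩
  have hterm : ∀ i, mkQF k A (hY.proj ((Θ (b.coord i) : A) ⊗ₜ 1))
      (counit Θ ιX hY (hX.proj (1 ⊗ₜ (b i : A))) (mkQF k A (hY.proj (c ⊗ₜ d)) n)) =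
      ρ (b i) • mkQF k A (hY.proj ((Θ (b.coord i) : A) ⊗ₜ 1)) ((e * d) • n) := by
    intro i
    rw [counit_mkQF, hX.apply_proj_tmul, hY.apply_proj_tmul, contraction_tmul,
      idealPairing_idem_mul Θ hf, idealPairing_mul_idem Θ hf', coe_idealPairing Θ hf,
      one_mul, ← mul_assoc, he.eq, smul_assoc, map_smul]
  rw [LinearMap.sum_apply, LinearMap.id_apply]
  simp only [LinearMap.comp_apply, hterm]
  calc ∑ i, ρ (b i) • mkQF k A (hY.proj ((Θ (b.coord i) : A) ⊗ₜ 1)) ((e * d) • n)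
      = mkQF k A (hY.proj ((Θ ρ : A) ⊗ₜ 1)) ((e * d) • n) := by
        conv_rhs => rw [← b.sum_dual_apply_smul_coord ρ]
        simp only [map_sum, map_smul, Submodule.coe_sum, Submodule.coe_smul, sum_tmul,
          ← smul_tmul', LinearMap.sum_apply, LinearMap.smul_apply]
    _ = mkQF k A (hY.proj (c ⊗ₜ d)) n := by
        rw [Θ.apply_symm_apply, ← mkQF_op_smul, hY.op_smul_proj_tmul, one_mul,
          hY.proj_mul_tmul hf', hY.proj_tmul_mul he]

variable [IsScalarTower k A Y] [IsScalarTower k Aᵐᵒᵖ Y] [SMulCommClass A Aᵐᵒᵖ Y]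

theorem LactF_unitPairing (hΘ : IsALinear Θ) (φ₀ : QF k A X M →ₗ[k] N)
    (ρ : rightIdeal k A f →ₗ[k] k) (z : rightIdeal k A f) (a : A) (m : M) :
    LactF k A Y N a (unitPairing Θ hX hY φ₀ ρ z m) =
      unitPairing Θ hX hY φ₀ (ρ ∘ₗ rmulIdeal k A f a) z m := by
  rw [unitPairing_apply, unitPairing_apply, LactF_mkQF, hY.smul_proj_tmul, hΘ]
  rfl

theorem transpose_comp_left {N' : Type v} [AddCommGroup N'] [Module k N'] [Module A N']
    [IsScalarTower k A N'] (χ : N →ₗ[k] N') (hχ : ∀ (a : A) (n : N), χ (a • n) = a • χ n)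
    (φ₀ : QF k A X M →ₗ[k] N) :
    transpose Θ hX hY b (χ ∘ₗ φ₀) = mapF k A Y χ hχ ∘ₗ transpose Θ hX hY b φ₀ := by
  ext m
  simp [transpose_apply, unitPairing_apply, mapF_mkQF]

theorem counit_LactF (hX : IsProjBimodEmbedding ιX e f) (hΘ : IsALinear Θ) (a : A) (x : X)
    (q : QF k A Y N) :
    counit Θ ιX hY x (LactF k A Y N a q) = counit Θ ιX hY (MulOpposite.op a • x) q := by
  refine LinearMap.congr_fun (QF_hom_ext (g := counit Θ ιX hY x ∘ₗ LactF k A Y N a)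
    fun y n => ?_) q
  simp [LactF_mkQF, counit_mkQF, hY.map_left_smul, hX.map_right_smul,
    contraction_map_mulRight_left Θ hΘ]

theorem transpose_smul
    (hΘ : IsALinear Θ)
    (φ₀ : QF k A X M →ₗ[k] N) (a : A) (m : M) :
    transpose Θ hX hY b φ₀ (a • m) = LactF k A Y N a (transpose Θ hX hY b φ₀ m) := by
  have hswap := LinearMap.congr_fun
    (b.sum_coord_comp_apply (unitPairing Θ hX hY φ₀) (rmulIdeal k A f a)) m
  simp only [LinearMap.sum_apply] at hswap
  simp only [transpose_apply, unitPairing_smul, map_sum, LactF_unitPairing Θ hX hY hΘ]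
  exact hswap.symm

noncomputable def transposeInv
    (hΘ : IsALinear Θ)
    (ψ₀ : M →ₗ[k] QF k A Y N) (hψ : ∀ (a : A) (m : M), ψ₀ (a • m) = LactF k A Y N a (ψ₀ m)) :
    QF k A X M →ₗ[k] N :=
  (relF k A X M).liftQ (TensorProduct.lift ((counit Θ ιX hY).compl₂ ψ₀)) <| by
    rw [relF, Submodule.span_le]
    rintro _ ⟨a, x, m, rfl⟩
    simp [hψ, counit_LactF Θ hY hX hΘ]

variable (hΘ : IsALinear Θ)
  (ψ₀ : M →ₗ[k] QF k A Y N) (hψ : ∀ (a : A) (m : M), ψ₀ (a • m) = LactF k A Y N a (ψ₀ m))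

theorem transposeInv_mkQF (x : X) (m : M) :
    transposeInv Θ hX hY hΘ ψ₀ hψ (mkQF k A x m) = counit Θ ιX hY x (ψ₀ m) := by
  rw [transposeInv, mkQF_apply, Submodule.liftQ_apply]
  simp

theorem transpose_transposeInv (he : IsIdempotentElem e) (hf : IsIdempotentElem f)
    (hf' : IsIdempotentElem f') : transpose Θ hX hY b (transposeInv Θ hX hY hΘ ψ₀ hψ) = ψ₀ := by
  ext m
  have h := LinearMap.congr_fun (sum_mkQF_comp_counit_eq_id Θ hX hY b he hf hf') (ψ₀ m)
  simpa [transpose_apply, unitPairing_apply, transposeInv_mkQF] using h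

variable [IsScalarTower k A X] [IsScalarTower k Aᵐᵒᵖ X] [SMulCommClass A Aᵐᵒᵖ X]
  [IsScalarTower k A M]

theorem transposeInv_LactF (a : A) (q : QF k A X M) :
    transposeInv Θ hX hY hΘ ψ₀ hψ (LactF k A X M a q) = a • transposeInv Θ hX hY hΘ ψ₀ hψ q := by
  refine LinearMap.congr_fun (QF_hom_ext (g := transposeInv Θ hX hY hΘ ψ₀ hψ ∘ₗ LactF k A X M a)
    (g' := Algebra.lsmul k k N a ∘ₗ transposeInv Θ hX hY hΘ ψ₀ hψ) fun x m => ?_) q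
  simp [LactF_mkQF, transposeInv_mkQF, counit_smul Θ hY hX]

theorem transposeInv_transpose (he : IsIdempotentElem e) (hf : IsIdempotentElem f)
    (hf' : IsIdempotentElem f') (φ : HomF k A X M N) :
    transposeInv Θ hX hY hΘ (transpose Θ hX hY b φ.1) (transpose_smul Θ hX hY b hΘ φ.1) = φ.1 := by
  refine hX.QF_hom_ext fun u v m => ?_
  -- the counit pairs `f v` with `Θ bᵢ*`, which extracts the `i`-th coordinate of `f v`
  have hterm : ∀ i, counit Θ ιX hY (hX.proj (u ⊗ₜ v)) (unitPairing Θ hX hY φ.1 (b.coord i) (b i) m)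
      = b.coord i ⟨f * v, v, rfl⟩ • (u * e) • φ.1 (mkQF k A (hX.proj (1 ⊗ₜ (b i : A))) m) := by
    intro i
    rw [unitPairing_apply, counit_mkQF, hX.apply_proj_tmul, hY.apply_proj_tmul, contraction_tmul,
      idealPairing_idem_mul Θ hf, idealPairing_mul_idem Θ hf', idealPairing_apply_coe Θ hf',
      mul_one, mul_assoc, he.eq, smul_assoc]
  set w : rightIdeal k A f := ⟨f * v, v, rfl⟩
  rw [transposeInv_mkQF, transpose_apply, map_sum, Finset.sum_congr rfl fun i _ => hterm i]
  calc ∑ i, b.coord i w • (u * e) • φ.1 (mkQF k A (hX.proj (1 ⊗ₜ (b i : A))) m)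
      = (u * e) • φ.1 (mkQF k A (hX.proj (1 ⊗ₜ (w : A))) m) := by
        have hw : (w : A) = ∑ i, b.coord i w • (b i : A) := by
          simp only [← Submodule.coe_smul, ← Submodule.coe_sum, Module.Basis.coord_apply,
            b.sum_repr]
        rw [hw, tmul_sum, map_sum, map_sum, LinearMap.sum_apply, map_sum, Finset.smul_sum]
        refine Finset.sum_congr rfl fun i _ => ?_
        rw [tmul_smul, map_smul, map_smul, LinearMap.smul_apply, map_smul, smul_comm]
    _ = φ.1 (mkQF k A ((u * e) • hX.proj (1 ⊗ₜ (w : A))) m) := by rw [← LactF_mkQF, φ.2]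
    _ = φ.1 (mkQF k A (hX.proj (u ⊗ₜ v)) m) := by
        rw [hX.smul_proj_tmul, mul_one, hX.proj_mul_tmul he, hX.proj_tmul_mul hf]

variable (M N) in
noncomputable def homEquiv (he : IsIdempotentElem e) (hf : IsIdempotentElem f)
    (hf' : IsIdempotentElem f') : HomF k A X M N ≃ HomG k A Y M N where
  toFun φ := ⟨transpose Θ hX hY b φ.1, transpose_smul Θ hX hY b hΘ φ.1⟩
  invFun ψ := ⟨transposeInv Θ hX hY hΘ ψ.1 ψ.2, transposeInv_LactF Θ hX hY hΘ ψ.1 ψ.2⟩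
  left_inv φ := Subtype.ext (transposeInv_transpose Θ hX hY b hΘ he hf hf' φ)
  right_inv ψ := Subtype.ext (transpose_transposeInv Θ hX hY b hΘ ψ.1 ψ.2 he hf hf')

end Adjunction

end Development

/-- Let `A` be a finite-dimensional `k`-algebra and `e, f, f'` idempotents
of `A` such that `Hom_k(fA, k) ≅ A f'` as left `A`-modules.  Let `X` be (a bimodule
isomorphic to) `A e ⊗[k] f A` and `Y` be (a bimodule isomorphic to) `A f' ⊗[k] e A`.
Then the endofunctor `X ⊗_A −` of the category of left `A`-modules is left adjoint to the
endofunctor `Y ⊗_A −`: there is a family of bijections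
`Hom_A((Ae ⊗ fA) ⊗_A M, N) ≃ Hom_A(M, (Af' ⊗ eA) ⊗_A N)`, natural in `M` and in `N`. -/
theorem tensor_functor_adjunction
    [FiniteDimensional k A] (e f f' : A)
    (he : IsIdempotentElem e) (hf : IsIdempotentElem f) (hf' : IsIdempotentElem f')
    (hdual : ∃ Θ : (rightIdeal k A f →ₗ[k] k) ≃ₗ[k] leftIdeal k A f',
      ∀ (a : A) (ψ : rightIdeal k A f →ₗ[k] k),
        Θ (ψ ∘ₗ rmulIdeal k A f a) = lmulIdeal k A f' a (Θ ψ))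
    (X Y : Type u) [AddCommGroup X] [Module k X]
    [Module A X] [Module Aᵐᵒᵖ X] [IsScalarTower k A X] [IsScalarTower k Aᵐᵒᵖ X]
    [SMulCommClass A Aᵐᵒᵖ X]
    [AddCommGroup Y] [Module k Y]
    [Module A Y] [Module Aᵐᵒᵖ Y] [IsScalarTower k A Y] [IsScalarTower k Aᵐᵒᵖ Y]
    [SMulCommClass A Aᵐᵒᵖ Y]
    (ιX : X →ₗ[k] A ⊗[k] A) (hιX : Function.Injective ιX)
    (hXrange : LinearMap.range ιX = projBimod k A e f)
    (hXl : ∀ (a : A) (x : X), ιX (a • x) =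
      TensorProduct.map (LinearMap.mulLeft k a) LinearMap.id (ιX x))
    (hXr : ∀ (b : A) (x : X), ιX (MulOpposite.op b • x) =
      TensorProduct.map LinearMap.id (LinearMap.mulRight k b) (ιX x))
    (ιY : Y →ₗ[k] A ⊗[k] A) (hιY : Function.Injective ιY)
    (hYrange : LinearMap.range ιY = projBimod k A f' e)
    (hYl : ∀ (a : A) (y : Y), ιY (a • y) =
      TensorProduct.map (LinearMap.mulLeft k a) LinearMap.id (ιY y))
    (hYr : ∀ (b : A) (y : Y), ιY (MulOpposite.op b • y) =
      TensorProduct.map LinearMap.id (LinearMap.mulRight k b) (ιY y)) :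
    ∃ θ : ∀ (M : Type v) [AddCommGroup M] [Module k M] [Module A M] [IsScalarTower k A M]
        (N : Type v) [AddCommGroup N] [Module k N] [Module A N] [IsScalarTower k A N],
        HomF k A X M N ≃ HomG k A Y M N,
      -- naturality in `N`
      (∀ (M : Type v) [AddCommGroup M] [Module k M] [Module A M] [IsScalarTower k A M]
         (N N' : Type v) [AddCommGroup N] [Module k N] [Module A N] [IsScalarTower k A N]
         [AddCommGroup N'] [Module k N'] [Module A N'] [IsScalarTower k A N']
         (χ : N →ₗ[k] N') (hχ : ∀ (a : A) (n : N), χ (a • n) = a • χ n)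
         (φ : HomF k A X M N),
         (θ M N' (postcompHomF k A X χ hχ φ)).1 =
           (mapF k A Y χ hχ) ∘ₗ (θ M N φ).1) ∧
      -- naturality in `M`
      (∀ (M M' : Type v) [AddCommGroup M] [Module k M] [Module A M] [IsScalarTower k A M]
         [AddCommGroup M'] [Module k M'] [Module A M'] [IsScalarTower k A M']
         (N : Type v) [AddCommGroup N] [Module k N] [Module A N] [IsScalarTower k A N]
         (χ : M' →ₗ[k] M) (hχ : ∀ (a : A) (m : M'), χ (a • m) = a • χ m)
         (φ : HomF k A X M N),
         (θ M' N (precompHomF k A X χ hχ φ)).1 = (θ M N φ).1 ∘ₗ χ) := by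
  obtain ⟨Θ, hΘ⟩ := hdual
  have hX : IsProjBimodEmbedding ιX e f := ⟨hιX, hXrange, hXl, hXr⟩
  have hY : IsProjBimodEmbedding ιY f' e := ⟨hιY, hYrange, hYl, hYr⟩
  let b := Module.finBasis k (rightIdeal k A f)
  refine ⟨fun M _ _ _ _ N _ _ _ _ => homEquiv Θ hX hY b M N hΘ he hf hf', ?_, ?_⟩
  · intro M _ _ _ _ N N' _ _ _ _ _ _ _ _ χ hχ φ
    exact transpose_comp_left Θ hX hY b χ hχ φ.1
  · intro M M' _ _ _ _ _ _ _ _ N _ _ _ _ χ hχ φ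
    exact transpose_comp_mapF Θ hX hY b χ hχ φ.1

end
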